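/- For the isotropic resource state ρ^{(F,d_Â)} with F ≤ 1/d_Â, the PPT simulation error of the d-dimensional swap channel equals 1 − 1/d² (no better than using no resource); and for F > 1/d_Â with d_Â ≤ d², the error equals 1 − F·d_Â/d². In particular, when d_Â = d² and F = 1 the error is 0. -/

import Mathlib

open Matrix ComplexOrder

/-- The maximally entangled state `Φ` on `ℂ^{dA} ⊗ ℂ^{dA}`. -/
noncomputable def maxEnt (dA : ℕ) : Matrix (Fin dA × Fin dA) (Fin dA × Fin dA) ℂ :=
  Matrix.of fun p q => if p.1 = p.2 ∧ q.1 = q.2 then (dA : ℂ)⁻¹ else 0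

/-- The isotropic state `ρ^{(F,dA)} = F·Φ + (1−F)(I−Φ)/(dA²−1)`. -/
noncomputable def isotropicState (dA : ℕ) (F : ℝ) :
    Matrix (Fin dA × Fin dA) (Fin dA × Fin dA) ℂ :=
  (F : ℂ) • maxEnt dA + (((1 - F) / ((dA : ℝ) ^ 2 - 1) : ℝ) : ℂ) • (1 - maxEnt dA)

/-- The partial transpose on the `B̂` system. -/
def ptB (dA : ℕ) (X : Matrix (Fin dA × Fin dA) (Fin dA × Fin dA) ℂ) :
    Matrix (Fin dA × Fin dA) (Fin dA × Fin dA) ℂ :=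
  Matrix.of fun p q => X (p.1, q.2) (q.1, p.2)

/-- The feasible values `Tr[ρK]` of the SDP for the PPT simulation error of the
`d`-dimensional swap channel with resource state `ρ`: `{K,L,N}` is a POVM subject to
the partial-transpose constraints of Proposition 1. -/
def sdpFeasible (d dA : ℕ) (ρ : Matrix (Fin dA × Fin dA) (Fin dA × Fin dA) ℂ) : Set ℝ :=
  {x : ℝ | ∃ K L N : Matrix (Fin dA × Fin dA) (Fin dA × Fin dA) ℂ,
    K.PosSemidef ∧ L.PosSemidef ∧ N.PosSemidef ∧ K + L + N = 1 ∧
    (ptB dA (K + ((d : ℂ) + 1)⁻¹ • L + (((d : ℂ) + 1) ^ 2)⁻¹ • N)).PosSemidef ∧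
    (ptB dA ((((d : ℂ) ^ 2 - 1))⁻¹ • (L + N) - K)).PosSemidef ∧
    (ptB dA (K + (((d : ℂ) - 1) ^ 2)⁻¹ • N - ((d : ℂ) - 1)⁻¹ • L)).PosSemidef ∧
    x = ((ρ * K).trace).re}

namespace PPTAux

variable {n : ℕ}

def swapM (n : ℕ) : Matrix (Fin n × Fin n) (Fin n × Fin n) ℂ :=
  Matrix.of fun p q => if p.1 = q.2 ∧ p.2 = q.1 then 1 else 0

noncomputable def sig (X : Matrix (Fin n × Fin n) (Fin n × Fin n) ℂ) : ℂ :=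
  ∑ i : Fin n, ∑ j : Fin n, X (j, j) (i, i)


open scoped MatrixOrder in
lemma psd_trace_re_nonneg {X Y : Matrix (Fin n × Fin n) (Fin n × Fin n) ℂ}
    (hX : X.PosSemidef) (hY : Y.PosSemidef) : 0 ≤ ((X * Y).trace).re := by
  obtain ⟨s, hs, rfl⟩ : ∃ s : Matrix (Fin n × Fin n) (Fin n × Fin n) ℂ,
      s.IsHermitian ∧ s * s = Y := ⟨CFC.sqrt Y, (CFC.sqrt_nonneg Y).posSemidef.isHermitian, CFC.sqrt_mul_sqrt_self Y hY.nonneg⟩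
  have h1 : (X * (s * s)).trace = (sᴴ * X * s).trace := by
    rw [hs.eq, ← Matrix.mul_assoc, Matrix.trace_mul_comm, Matrix.mul_assoc]
  rw [h1]
  have h2 : (sᴴ * X * s).PosSemidef := hX.conjTranspose_mul_mul_same s
  have h3 : (0:ℂ) ≤ (sᴴ * X * s).trace := by
    unfold Matrix.trace
    apply Finset.sum_nonneg
    intro i _
    have := h2.dotProduct_mulVec_nonneg (Pi.single i 1)
    simpa [dotProduct, Matrix.mulVec, Pi.single_apply, Matrix.diag] using this
  exact (Complex.le_def.mp h3).1


lemma psd_smul {X : Matrix (Fin n × Fin n) (Fin n × Fin n) ℂ} (hX : X.PosSemidef)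
    {c : ℝ} (hc : 0 ≤ c) : ((c : ℂ) • X).PosSemidef := by
  refine Matrix.PosSemidef.of_dotProduct_mulVec_nonneg ?_ ?_
  · unfold Matrix.IsHermitian
    rw [conjTranspose_smul, hX.1.eq]
    congr 1
    simp [Complex.ext_iff]
  · intro x
    rw [smul_mulVec, dotProduct_smul]
    exact mul_nonneg (by simpa using Complex.zero_le_real.2 hc) (hX.dotProduct_mulVec_nonneg x)

lemma phi_mul_phi : maxEnt n * maxEnt n = maxEnt n := by
  ext ⟨p1, p2⟩ ⟨q1, q2⟩
  simp only [Matrix.mul_apply, maxEnt, Matrix.of_apply, Fintype.sum_prod_type]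
  simp only [ite_and, Finset.sum_ite_eq, Finset.mem_univ, if_true, mul_ite, mul_zero, ite_mul,
    zero_mul, Finset.sum_ite_irrel, Finset.sum_const_zero, Finset.sum_const, Finset.card_univ,
    Fintype.card_fin]
  split_ifs with h1 h2 h2 <;> try simp_all
  rcases Nat.eq_zero_or_pos n with h | h
  · exact absurd p1.2 (by omega)
  · field_simp

lemma phi_herm : (maxEnt n).IsHermitian := by
  unfold Matrix.IsHermitian
  ext ⟨p1, p2⟩ ⟨q1, q2⟩
  simp only [conjTranspose_apply, maxEnt, Matrix.of_apply]
  split_ifs with h1 h2 h2 <;> simp_all [and_comm, Complex.ext_iff]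

lemma swap_herm : (swapM n).IsHermitian := by
  unfold Matrix.IsHermitian
  ext ⟨p1, p2⟩ ⟨q1, q2⟩
  simp only [conjTranspose_apply, swapM, Matrix.of_apply]
  split_ifs with h1 h2 h2 <;> simp_all [Complex.ext_iff] <;> tauto

lemma swap_mul_swap : swapM n * swapM n = 1 := by
  ext ⟨p1, p2⟩ ⟨q1, q2⟩
  simp only [Matrix.mul_apply, swapM, Matrix.of_apply, Fintype.sum_prod_type, ite_and]
  simp only [Matrix.one_apply, Finset.sum_ite_eq, Finset.mem_univ, if_true]
  simp [Finset.sum_ite_eq', Prod.ext_iff, ite_and, eq_comm]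

lemma phi_psd : (maxEnt n).PosSemidef := by
  refine Matrix.PosSemidef.of_dotProduct_mulVec_nonneg phi_herm (fun x => ?_)
  have hx : (maxEnt n) *ᵥ x = fun p => if p.1 = p.2 then (n:ℂ)⁻¹ * (∑ j : Fin n, x (j, j)) else 0 := by
    funext ⟨p1, p2⟩
    simp only [Matrix.mulVec, dotProduct, maxEnt, Matrix.of_apply, Fintype.sum_prod_type,
      ite_and]
    split_ifs with h
    · simp [Finset.mul_sum, Finset.sum_ite_eq]
    · simp [h]
  rw [hx]
  have hs : (dotProduct (star x) fun p => if p.1 = p.2 then (n:ℂ)⁻¹ * (∑ j : Fin n, x (j, j)) else 0)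
      = (n:ℂ)⁻¹ * (star (∑ j : Fin n, x (j, j)) * (∑ j : Fin n, x (j, j))) := by
    simp only [dotProduct, Fintype.sum_prod_type, Pi.star_apply, mul_ite, mul_zero]
    simp only [Finset.sum_ite_eq, Finset.mem_univ, if_true, star_sum, Finset.sum_mul]
    have e1 : ∑ i : Fin n, star (x (i,i)) * (∑ j : Fin n, x (j,j))
        = (∑ i : Fin n, star (x (i,i))) * (∑ j : Fin n, x (j,j)) := (Finset.sum_mul _ _ _).symm
    have e2 : ∑ i : Fin n, star (x (i,i)) * ((n:ℂ)⁻¹ * ∑ j : Fin n, x (j,j))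
        = (∑ i : Fin n, star (x (i,i))) * ((n:ℂ)⁻¹ * ∑ j : Fin n, x (j,j)) := (Finset.sum_mul _ _ _).symm
    rw [e1, e2]
    ring
  rw [hs]
  have h1 : (0:ℂ) ≤ (n:ℂ)⁻¹ := by
    rw [show ((n:ℂ))⁻¹ = (((n:ℝ))⁻¹ : ℝ) by push_cast; ring]
    exact Complex.zero_le_real.2 (by positivity)
  exact mul_nonneg h1 (star_mul_self_nonneg _)

lemma one_sub_phi_psd : ((1 : Matrix (Fin n × Fin n) (Fin n × Fin n) ℂ) - maxEnt n).PosSemidef := by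
  have h : (1 - maxEnt n) = (1 - maxEnt n)ᴴ * (1 - maxEnt n) := by
    have hh : (1 - maxEnt n)ᴴ = 1 - maxEnt n := by
      rw [conjTranspose_sub, conjTranspose_one, phi_herm.eq]
    rw [hh, Matrix.sub_mul, Matrix.mul_sub, Matrix.mul_sub, phi_mul_phi]
    simp
  rw [h]
  exact Matrix.posSemidef_conjTranspose_mul_self _

lemma one_add_swap_psd : ((1 : Matrix (Fin n × Fin n) (Fin n × Fin n) ℂ) + swapM n).PosSemidef := by
  have hh : (1 + swapM n)ᴴ = 1 + swapM n := by
    rw [conjTranspose_add, conjTranspose_one, swap_herm.eq]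
  have h2 : (1 + swapM n)ᴴ * (1 + swapM n) = (2:ℂ) • (1 + swapM n) := by
    rw [hh]
    simp only [Matrix.add_mul, Matrix.mul_add, swap_mul_swap, Matrix.mul_one, Matrix.one_mul,
      two_smul]
    abel
  have h : 1 + swapM n = ((2⁻¹ : ℝ) : ℂ) • ((1 + swapM n)ᴴ * (1 + swapM n)) := by
    rw [h2, smul_smul, show ((((2:ℝ)⁻¹ : ℝ) : ℂ) * 2 = 1) by push_cast; norm_num, one_smul]
  rw [h]
  exact psd_smul (c := (2:ℝ)⁻¹) (Matrix.posSemidef_conjTranspose_mul_self _) (by norm_num)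

lemma one_sub_swap_psd : ((1 : Matrix (Fin n × Fin n) (Fin n × Fin n) ℂ) - swapM n).PosSemidef := by
  have hh : (1 - swapM n)ᴴ = 1 - swapM n := by
    rw [conjTranspose_sub, conjTranspose_one, swap_herm.eq]
  have h2 : (1 - swapM n)ᴴ * (1 - swapM n) = (2:ℂ) • (1 - swapM n) := by
    rw [hh]
    simp only [Matrix.sub_mul, Matrix.mul_sub, swap_mul_swap, Matrix.mul_one, Matrix.one_mul,
      two_smul]
    abel
  have h : 1 - swapM n = ((2⁻¹ : ℝ) : ℂ) • ((1 - swapM n)ᴴ * (1 - swapM n)) := by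
    rw [h2, smul_smul, show ((((2:ℝ)⁻¹ : ℝ) : ℂ) * 2 = 1) by push_cast; norm_num, one_smul]
  rw [h]
  exact psd_smul (c := (2:ℝ)⁻¹) (Matrix.posSemidef_conjTranspose_mul_self _) (by norm_num)



lemma ptB_add (X Y : Matrix (Fin n × Fin n) (Fin n × Fin n) ℂ) :
    ptB n (X + Y) = ptB n X + ptB n Y := by
  ext p q; simp [ptB]

lemma ptB_sub (X Y : Matrix (Fin n × Fin n) (Fin n × Fin n) ℂ) :
    ptB n (X - Y) = ptB n X - ptB n Y := by
  ext p q; simp [ptB]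

lemma ptB_smul (c : ℂ) (X : Matrix (Fin n × Fin n) (Fin n × Fin n) ℂ) :
    ptB n (c • X) = c • ptB n X := by
  ext p q; simp [ptB]

lemma ptB_zero : ptB n (0 : Matrix (Fin n × Fin n) (Fin n × Fin n) ℂ) = 0 := by
  ext p q; simp [ptB]

lemma ptB_one : ptB n (1 : Matrix (Fin n × Fin n) (Fin n × Fin n) ℂ) = 1 := by
  ext ⟨p1, p2⟩ ⟨q1, q2⟩
  simp only [ptB, Matrix.of_apply, Matrix.one_apply, Prod.ext_iff]
  split_ifs with h1 h2 h2
  · rfl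
  · exact absurd ⟨h1.1, h1.2.symm⟩ h2
  · exact absurd ⟨h2.1, h2.2.symm⟩ h1
  · rfl

lemma ptB_phi : ptB n (maxEnt n) = (n : ℂ)⁻¹ • swapM n := by
  ext ⟨p1, p2⟩ ⟨q1, q2⟩
  simp only [ptB, maxEnt, swapM, Matrix.of_apply, Matrix.smul_apply, smul_ite, smul_zero]
  split_ifs <;> simp_all

lemma trace_ptB (X : Matrix (Fin n × Fin n) (Fin n × Fin n) ℂ) :
    (ptB n X).trace = X.trace := by
  unfold Matrix.trace
  apply Finset.sum_congr rfl
  rintro ⟨i, j⟩ _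
  simp [ptB, Matrix.diag]

lemma trace_swap_ptB (X : Matrix (Fin n × Fin n) (Fin n × Fin n) ℂ) :
    (swapM n * ptB n X).trace = sig X := by
  unfold Matrix.trace sig
  rw [Fintype.sum_prod_type]
  apply Finset.sum_congr rfl
  intro i _
  simp only [Matrix.diag, Matrix.mul_apply, swapM, ptB, Matrix.of_apply, Fintype.sum_prod_type,
    ite_and, ite_mul, zero_mul]
  simp [Finset.sum_ite_eq', Finset.sum_ite_eq]

lemma phi_mul_apply (X : Matrix (Fin n × Fin n) (Fin n × Fin n) ℂ) (p q : Fin n × Fin n) :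
    (maxEnt n * X) p q = if p.1 = p.2 then (n:ℂ)⁻¹ * ∑ k : Fin n, X (k, k) q else 0 := by
  simp only [Matrix.mul_apply, maxEnt, Matrix.of_apply, Fintype.sum_prod_type, ite_and,
    ite_mul, zero_mul]
  split_ifs with h
  · simp [Finset.sum_ite_eq, Finset.mul_sum]
  · simp [h]

lemma trace_phi_mul (X : Matrix (Fin n × Fin n) (Fin n × Fin n) ℂ) :
    (maxEnt n * X).trace = (n : ℂ)⁻¹ * sig X := by
  unfold Matrix.trace sig
  rw [Fintype.sum_prod_type, Finset.mul_sum]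
  apply Finset.sum_congr rfl
  intro i _
  have : ∀ j : Fin n, (maxEnt n * X).diag (i, j)
      = if i = j then (n:ℂ)⁻¹ * ∑ k : Fin n, X (k, k) (i, j) else 0 := by
    intro j; rw [Matrix.diag]; rw [phi_mul_apply]
  simp only [this]
  rw [Finset.sum_ite_eq]
  simp

lemma trace_phi (hn : 0 < n) : (maxEnt n).trace = 1 := by
  unfold Matrix.trace
  rw [Fintype.sum_prod_type]
  simp only [Matrix.diag, maxEnt, Matrix.of_apply]
  simp [Finset.sum_ite_eq, Finset.card_univ]
  field_simp

lemma sig_add (X Y : Matrix (Fin n × Fin n) (Fin n × Fin n) ℂ) : sig (X + Y) = sig X + sig Y := by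
  unfold sig; rw [← Finset.sum_add_distrib]
  apply Finset.sum_congr rfl; intro i _; rw [← Finset.sum_add_distrib]; simp

lemma sig_sub (X Y : Matrix (Fin n × Fin n) (Fin n × Fin n) ℂ) : sig (X - Y) = sig X - sig Y := by
  unfold sig; rw [← Finset.sum_sub_distrib]
  apply Finset.sum_congr rfl; intro i _; rw [← Finset.sum_sub_distrib]; simp

lemma sig_smul (c : ℂ) (X : Matrix (Fin n × Fin n) (Fin n × Fin n) ℂ) : sig (c • X) = c * sig X := by
  unfold sig
  rw [Finset.mul_sum]
  apply Finset.sum_congr rfl; intro i _; rw [Finset.mul_sum]; simp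

lemma sig_one : sig (1 : Matrix (Fin n × Fin n) (Fin n × Fin n) ℂ) = n := by
  unfold sig
  simp [Matrix.one_apply, Prod.ext_iff, Finset.sum_ite_eq, Finset.card_univ]



lemma re_real_mul (r : ℝ) (z : ℂ) : ((r : ℂ) * z).re = r * z.re := by
  simp [Complex.mul_re]

set_option maxHeartbeats 1000000 in
lemma upper_bound {d n : ℕ} (hd : 2 ≤ d) (hn : 2 ≤ n) {F : ℝ} (hF0 : 0 ≤ F) (hF1 : F ≤ 1)
    {K L N : Matrix (Fin n × Fin n) (Fin n × Fin n) ℂ}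
    (hK : K.PosSemidef) (hL : L.PosSemidef) (hN : N.PosSemidef)
    (hsum : K + L + N = 1)
    (h2 : (ptB n ((((d : ℂ) ^ 2 - 1))⁻¹ • (L + N) - K)).PosSemidef) :
    (F * n ≤ 1 → ((isotropicState n F * K).trace).re ≤ 1 / (d : ℝ) ^ 2) ∧
    (1 ≤ F * n → ((isotropicState n F * K).trace).re ≤ F * n / (d : ℝ) ^ 2) := by
  set t : ℝ := (d : ℝ) with ht_def
  set D : ℝ := (n : ℝ) with hD_def
  have ht : (2:ℝ) ≤ t := by rw [ht_def]; exact_mod_cast hd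
  have hD : (2:ℝ) ≤ D := by rw [hD_def]; exact_mod_cast hn
  have hDpos : (0:ℝ) < D := by linarith
  have htpos : (0:ℝ) < t := by linarith
  have hD21 : (0:ℝ) < D^2 - 1 := by nlinarith
  have ht21 : (0:ℝ) < t^2 - 1 := by nlinarith
  -- scalar quantities
  set aK : ℝ := (sig K).re with haK_def
  set aL : ℝ := (sig L).re with haL_def
  set aN : ℝ := (sig N).re with haN_def
  set sK : ℝ := (K.trace).re with hsK_def
  set sL : ℝ := (L.trace).re with hsL_def
  set sN : ℝ := (N.trace).re with hsN_def
  have hinv_cast : ((n:ℂ))⁻¹ = (((D⁻¹ : ℝ)) : ℂ) := by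
    rw [hD_def]; push_cast; ring
  -- aK ≥ 0 etc.
  have haX : ∀ X : Matrix (Fin n × Fin n) (Fin n × Fin n) ℂ, X.PosSemidef → 0 ≤ (sig X).re := by
    intro X hX
    have h := psd_trace_re_nonneg phi_psd hX
    rw [trace_phi_mul, hinv_cast, re_real_mul] at h
    nlinarith [h, inv_pos.mpr hDpos]
  have haK : 0 ≤ aK := haX K hK
  have haL : 0 ≤ aL := haX L hL
  have haN : 0 ≤ aN := haX N hN
  -- D sX − aX ≥ 0
  have hsaX : ∀ X : Matrix (Fin n × Fin n) (Fin n × Fin n) ℂ, X.PosSemidef →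
      0 ≤ D * (X.trace).re - (sig X).re := by
    intro X hX
    have h := psd_trace_re_nonneg one_sub_phi_psd hX
    rw [Matrix.sub_mul, Matrix.one_mul, Matrix.trace_sub, trace_phi_mul, hinv_cast] at h
    rw [Complex.sub_re, re_real_mul] at h
    have := mul_le_mul_of_nonneg_left h (le_of_lt hDpos)
    rw [mul_zero] at this
    calc (0:ℝ) ≤ D * ((X.trace).re - D⁻¹ * (sig X).re) := this
      _ = D * (X.trace).re - (sig X).re := by field_simp <;> ring
  have hsaK := hsaX K hK
  -- trace equalities
  have hsumtr : sK + sL + sN = D^2 := by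
    have h := congrArg Matrix.trace hsum
    rw [Matrix.trace_add, Matrix.trace_add, Matrix.trace_one] at h
    have h' := congrArg Complex.re h
    simp only [Complex.add_re] at h'
    rw [hsK_def, hsL_def, hsN_def, hD_def]
    rw [h']
    simp [Fintype.card_prod]
    push_cast
    ring
  have hsumsig : aK + aL + aN = D := by
    have h : sig (K + L + N) = sig (1 : Matrix (Fin n × Fin n) (Fin n × Fin n) ℂ) := by rw [hsum]
    rw [sig_add, sig_add, sig_one] at h
    have h' := congrArg Complex.re h
    simp only [Complex.add_re] at h'
    rw [haK_def, haL_def, haN_def, hD_def]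
    rw [h']
    simp
  -- PPT pairing with C2
  set C : Matrix (Fin n × Fin n) (Fin n × Fin n) ℂ := (((d : ℂ) ^ 2 - 1))⁻¹ • (L + N) - K with hC
  have hcast2 : (((d : ℂ) ^ 2 - 1))⁻¹ = ((((t^2-1)⁻¹ : ℝ)) : ℂ) := by
    rw [ht_def]; push_cast; ring
  have htr' : C.trace = ((((t^2-1)⁻¹ : ℝ)) : ℂ) * (L.trace + N.trace) - K.trace := by
    rw [hC, Matrix.trace_sub, Matrix.trace_smul, Matrix.trace_add, hcast2, smul_eq_mul]
  have hsg' : sig C = ((((t^2-1)⁻¹ : ℝ)) : ℂ) * (sig L + sig N) - sig K := by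
    rw [hC, sig_sub, sig_smul, sig_add, hcast2]
  have hplus : 0 ≤ (t^2-1)⁻¹ * ((sL + sN) + (aL + aN)) - (sK + aK) := by
    have h0 := psd_trace_re_nonneg one_add_swap_psd h2
    rw [Matrix.add_mul, Matrix.one_mul, Matrix.trace_add, trace_ptB, trace_swap_ptB,
      htr', hsg'] at h0
    simp only [Complex.add_re, Complex.sub_re, re_real_mul] at h0
    rw [hsK_def, hsL_def, hsN_def, haK_def, haL_def, haN_def]
    linarith [h0]
  have hminus : 0 ≤ (t^2-1)⁻¹ * ((sL + sN) - (aL + aN)) - (sK - aK) := by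
    have h0 := psd_trace_re_nonneg one_sub_swap_psd h2
    rw [Matrix.sub_mul, Matrix.one_mul, Matrix.trace_sub, trace_ptB, trace_swap_ptB,
      htr', hsg'] at h0
    simp only [Complex.add_re, Complex.sub_re, re_real_mul] at h0
    rw [hsK_def, hsL_def, hsN_def, haK_def, haL_def, haN_def]
    linarith [h0]
  have hHp : 0 ≤ D^2 + D - t^2 * sK - t^2 * aK := by
    have h' := mul_le_mul_of_nonneg_left hplus (le_of_lt ht21)
    rw [mul_zero] at h'
    have hex : (t^2-1) * ((t^2-1)⁻¹ * ((sL + sN) + (aL + aN)) - (sK + aK))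
        = (sL + sN) + (aL + aN) - (t^2-1) * (sK + aK) := by field_simp <;> ring
    rw [hex] at h'
    nlinarith [h', hsumtr, hsumsig]
  have hHm : 0 ≤ D^2 - D - t^2 * sK + t^2 * aK := by
    have h' := mul_le_mul_of_nonneg_left hminus (le_of_lt ht21)
    rw [mul_zero] at h'
    have hex : (t^2-1) * ((t^2-1)⁻¹ * ((sL + sN) - (aL + aN)) - (sK - aK))
        = (sL + sN) - (aL + aN) - (t^2-1) * (sK - aK) := by field_simp <;> ring
    rw [hex] at h'
    nlinarith [h', hsumtr, hsumsig]
  -- the objective value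
  have hobj : ((isotropicState n F * K).trace).re
      = (F * aK * (D^2 - 1) + (1 - F) * (D * sK - aK)) / (D * (D^2 - 1)) := by
    unfold isotropicState
    rw [Matrix.add_mul, Matrix.smul_mul, Matrix.smul_mul, Matrix.trace_add, Matrix.trace_smul,
      Matrix.trace_smul, Matrix.sub_mul, Matrix.one_mul, Matrix.trace_sub, trace_phi_mul,
      hinv_cast]
    rw [smul_eq_mul, smul_eq_mul]
    have hFc : (F : ℂ) = ((F : ℝ) : ℂ) := rfl
    simp only [Complex.add_re, Complex.sub_re, re_real_mul]
    rw [← hsK_def, ← haK_def, ← hD_def]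
    field_simp
  constructor
  · intro hFD
    rw [hobj]
    rw [div_le_div_iff₀ (by positivity) (by positivity)]
    nlinarith [mul_nonneg (mul_nonneg (by linarith : (0:ℝ) ≤ (D-1)) (by nlinarith : (0:ℝ) ≤ 1 + F*D)) hHp,
      mul_nonneg (mul_nonneg (by linarith : (0:ℝ) ≤ (D+1)) (by nlinarith : (0:ℝ) ≤ 1 - F*D)) hHm]
  · intro hFD
    rw [hobj]
    rw [div_le_div_iff₀ (by positivity) (by positivity)]
    nlinarith [mul_nonneg (mul_nonneg (by positivity : (0:ℝ) ≤ t^2) (by nlinarith : (0:ℝ) ≤ F*D - 1)) hsaK,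
      mul_nonneg (mul_nonneg (by positivity : (0:ℝ) ≤ F*D) (by linarith : (0:ℝ) ≤ D - 1)) hHp]

lemma cast_ne_d1 {d : ℕ} (hd : 2 ≤ d) : ((d:ℂ) + 1) ≠ 0 := by
  have : ((d:ℂ) + 1) = ((d + 1 : ℕ) : ℂ) := by push_cast; ring
  rw [this]
  exact_mod_cast Nat.succ_ne_zero d

lemma cast_ne_dm1 {d : ℕ} (hd : 2 ≤ d) : ((d:ℂ) - 1) ≠ 0 := by
  rw [sub_ne_zero]
  intro h
  have : d = 1 := by exact_mod_cast h
  omega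

lemma cast_ne_d2 {d : ℕ} (hd : 2 ≤ d) : ((d:ℂ)^2 - 1) ≠ 0 := by
  rw [sub_ne_zero]
  intro h
  have : d^2 = 1 := by exact_mod_cast h
  nlinarith

lemma cast_ne_d0 {d : ℕ} (hd : 2 ≤ d) : ((d:ℂ)) ≠ 0 := by
  exact_mod_cast (by omega : d ≠ 0)

lemma trace_one_sq (n : ℕ) : (1 : Matrix (Fin n × Fin n) (Fin n × Fin n) ℂ).trace = ((n:ℂ))^2 := by
  rw [Matrix.trace_one]
  simp [Fintype.card_prod]
  push_cast
  ring

lemma mem_case1 {d n : ℕ} (hd : 2 ≤ d) (hn : 2 ≤ n) {F : ℝ} (hF0 : 0 ≤ F) (hF1 : F ≤ 1) :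
    (1 / (d : ℝ)^2) ∈ sdpFeasible d n (isotropicState n F) := by
  have ht : (2:ℝ) ≤ (d:ℝ) := by exact_mod_cast hd
  have hD : (2:ℝ) ≤ (n:ℝ) := by exact_mod_cast hn
  have hc1 : ((d:ℂ) + 1) ≠ 0 := cast_ne_d1 hd
  have hc2 : ((d:ℂ)^2 - 1) ≠ 0 := cast_ne_d2 hd
  have hc3 : ((d:ℂ) - 1) ≠ 0 := cast_ne_dm1 hd
  have hc0 : ((d:ℂ)) ≠ 0 := cast_ne_d0 hd
  set k : ℝ := (((d:ℝ))^2)⁻¹ with hk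
  have hk0 : 0 ≤ k := by positivity
  have hk1 : k ≤ 1 := by
    rw [hk, inv_le_one_iff₀]
    right; nlinarith
  refine ⟨((k:ℝ):ℂ) • 1, 0, (((1-k):ℝ):ℂ) • 1, psd_smul Matrix.PosSemidef.one hk0,
    Matrix.PosSemidef.zero, psd_smul Matrix.PosSemidef.one (by linarith), ?_, ?_, ?_, ?_, ?_⟩
  · match_scalars
    push_cast
    ring
  · have e1 : ((k:ℝ):ℂ) • (1 : Matrix (Fin n × Fin n) (Fin n × Fin n) ℂ)
        + ((d : ℂ) + 1)⁻¹ • (0 : Matrix (Fin n × Fin n) (Fin n × Fin n) ℂ)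
        + (((d : ℂ) + 1) ^ 2)⁻¹ • ((((1-k):ℝ):ℂ) • 1)
        = (((k + (1-k)/((d:ℝ)+1)^2 : ℝ)) : ℂ) • 1 := by
      match_scalars
      push_cast
      field_simp
    rw [e1, ptB_smul, ptB_one]
    exact psd_smul Matrix.PosSemidef.one
      (add_nonneg hk0 (div_nonneg (by linarith) (by positivity)))
  · have e2 : (((d : ℂ) ^ 2 - 1))⁻¹ • ((0 : Matrix (Fin n × Fin n) (Fin n × Fin n) ℂ)
        + (((1-k):ℝ):ℂ) • 1) - ((k:ℝ):ℂ) • 1 = (0 : Matrix (Fin n × Fin n) (Fin n × Fin n) ℂ) := by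
      match_scalars
      rw [hk]
      push_cast
      field_simp
      ring
    rw [e2, ptB_zero]
    exact Matrix.PosSemidef.zero
  · have e3 : ((k:ℝ):ℂ) • (1 : Matrix (Fin n × Fin n) (Fin n × Fin n) ℂ)
        + (((d : ℂ) - 1) ^ 2)⁻¹ • ((((1-k):ℝ):ℂ) • 1)
        - ((d : ℂ) - 1)⁻¹ • (0 : Matrix (Fin n × Fin n) (Fin n × Fin n) ℂ)
        = (((k + (1-k)/((d:ℝ)-1)^2 : ℝ)) : ℂ) • 1 := by
      match_scalars
      push_cast
      have hne' : ((d:ℝ) - 1) ≠ 0 := by intro h; nlinarith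
      field_simp
    rw [e3, ptB_smul, ptB_one]
    have hd1 : (0:ℝ) < ((d:ℝ)-1)^2 := by nlinarith
    exact psd_smul Matrix.PosSemidef.one
      (add_nonneg hk0 (div_nonneg (by linarith) (le_of_lt hd1)))
  · have hmul : isotropicState n F * (((k:ℝ):ℂ) • 1) = ((k:ℝ):ℂ) • isotropicState n F := by
      rw [Matrix.mul_smul, Matrix.mul_one]
    rw [hmul, Matrix.trace_smul, smul_eq_mul]
    have htrρ : (isotropicState n F).trace = 1 := by
      unfold isotropicState
      rw [Matrix.trace_add, Matrix.trace_smul, Matrix.trace_smul, Matrix.trace_sub,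
        trace_one_sq, trace_phi (by omega), smul_eq_mul, smul_eq_mul, mul_one]
      push_cast
      field_simp [cast_ne_d2 hn]
      ring
    rw [htrρ, mul_one, Complex.ofReal_re, hk, one_div]

lemma ptB_iso {n : ℕ} (hn : 2 ≤ n) (x1 x2 : ℝ) :
    ptB n ((x1:ℂ) • maxEnt n + (x2:ℂ) • (1 - maxEnt n))
      = (x2:ℂ) • 1 + ((((x1 - x2)/(n:ℝ) : ℝ)):ℂ) • swapM n := by
  rw [ptB_add, ptB_smul, ptB_smul, ptB_sub, ptB_one, ptB_phi]
  have hn0 : ((n:ℂ)) ≠ 0 := cast_ne_d0 hn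
  match_scalars <;> (push_cast; try field_simp) <;> try ring

set_option maxHeartbeats 2000000 in
lemma mem_case2 {d n : ℕ} (hd : 2 ≤ d) (hn : 2 ≤ n) (hnd : n ≤ d^2)
    {F : ℝ} (hF0 : 0 ≤ F) (hF1 : F ≤ 1) :
    (F * (n:ℝ) / (d : ℝ)^2) ∈ sdpFeasible d n (isotropicState n F) := by
  have ht : (2:ℝ) ≤ (d:ℝ) := by exact_mod_cast hd
  have hD : (2:ℝ) ≤ (n:ℝ) := by exact_mod_cast hn
  have hnd' : (n:ℝ) ≤ (d:ℝ)^2 := by exact_mod_cast hnd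
  have hc1 : ((d:ℂ) + 1) ≠ 0 := cast_ne_d1 hd
  have hc2 : ((d:ℂ)^2 - 1) ≠ 0 := cast_ne_d2 hd
  have hc3 : ((d:ℂ) - 1) ≠ 0 := cast_ne_dm1 hd
  have hc0 : ((d:ℂ)) ≠ 0 := cast_ne_d0 hd
  have hcn1 : ((n:ℂ) + 1) ≠ 0 := cast_ne_d1 hn
  have hcn0 : ((n:ℂ)) ≠ 0 := cast_ne_d0 hn
  set κ : ℝ := (n:ℝ)/((d:ℝ))^2 with hκ
  set l : ℝ := 2*(n:ℝ)/(((d:ℝ))^2 * ((n:ℝ)+1)) with hl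
  have hκ0 : 0 ≤ κ := by positivity
  have hκ1 : κ ≤ 1 := by rw [hκ, div_le_one (by positivity)]; exact hnd'
  have hl0 : 0 ≤ l := by positivity
  have hl1 : l ≤ 1 := by
    rw [hl, div_le_one (by positivity)]
    nlinarith
  have hlt : l * (d:ℝ) ≤ 1 := by
    rw [hl, div_mul_eq_mul_div, div_le_one (by positivity)]
    nlinarith [mul_nonneg (mul_nonneg (by linarith : (0:ℝ) ≤ (d:ℝ) - 2) (by linarith : (0:ℝ) ≤ (n:ℝ))) (by linarith : (0:ℝ) ≤ (d:ℝ)), sq_nonneg ((d:ℝ))]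
  refine ⟨((κ:ℝ):ℂ) • maxEnt n, ((l:ℝ):ℂ) • (1 - maxEnt n),
    (((1-κ):ℝ):ℂ) • maxEnt n + (((1-l):ℝ):ℂ) • (1 - maxEnt n),
    psd_smul phi_psd hκ0, psd_smul one_sub_phi_psd hl0,
    Matrix.PosSemidef.add (psd_smul phi_psd (by linarith)) (psd_smul one_sub_phi_psd (by linarith)),
    ?_, ?_, ?_, ?_, ?_⟩
  · match_scalars <;> (push_cast; ring)
  · -- constraint C1
    set x1 : ℝ := κ + (1-κ)/((d:ℝ)+1)^2 with hx1
    set x2 : ℝ := l/((d:ℝ)+1) + (1-l)/((d:ℝ)+1)^2 with hx2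
    have eC : ((κ:ℝ):ℂ) • maxEnt n + ((d : ℂ) + 1)⁻¹ • (((l:ℝ):ℂ) • (1 - maxEnt n))
        + (((d : ℂ) + 1) ^ 2)⁻¹ • ((((1-κ):ℝ):ℂ) • maxEnt n + (((1-l):ℝ):ℂ) • (1 - maxEnt n))
        = (x1:ℂ) • maxEnt n + (x2:ℂ) • (1 - maxEnt n) := by
      rw [hx1, hx2]
      match_scalars <;> (push_cast; field_simp) <;> ring
    have hx20 : 0 ≤ x2 := by
      rw [hx2]
      exact add_nonneg (div_nonneg hl0 (by linarith)) (div_nonneg (by linarith) (by positivity))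
    have hrel : (x1 - x2)/(n:ℝ) = x2 := by
      rw [hx1, hx2, hκ, hl]
      have h1 : ((d:ℝ)+1) ≠ 0 := by positivity
      have h2 : ((n:ℝ)+1) ≠ 0 := by positivity
      have h3 : ((d:ℝ)) ≠ 0 := by positivity
      have h4 : ((n:ℝ)) ≠ 0 := by positivity
      field_simp
      ring
    rw [eC, ptB_iso hn, hrel]
    have : ((x2:ℝ):ℂ) • (1 : Matrix (Fin n × Fin n) (Fin n × Fin n) ℂ) + ((x2:ℝ):ℂ) • swapM n
        = ((x2:ℝ):ℂ) • (1 + swapM n) := by match_scalars <;> ring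
    rw [this]
    exact psd_smul one_add_swap_psd hx20
  · -- constraint C2
    set x1 : ℝ := (1-κ)/((d:ℝ)^2-1) - κ with hx1
    set x2 : ℝ := ((d:ℝ)^2-1)⁻¹ with hx2
    have htd : (1:ℝ) < (d:ℝ)^2 := by nlinarith
    have eC : (((d : ℂ) ^ 2 - 1))⁻¹ • (((l:ℝ):ℂ) • (1 - maxEnt n)
          + ((((1-κ):ℝ):ℂ) • maxEnt n + (((1-l):ℝ):ℂ) • (1 - maxEnt n)))
        - ((κ:ℝ):ℂ) • maxEnt n
        = (x1:ℂ) • maxEnt n + (x2:ℂ) • (1 - maxEnt n) := by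
      rw [hx1, hx2]
      match_scalars <;> (push_cast; field_simp) <;> ring
    have hx20 : 0 ≤ x2 := by rw [hx2]; exact inv_nonneg.2 (by nlinarith)
    have hrel : (x1 - x2)/(n:ℝ) = -x2 := by
      rw [hx1, hx2, hκ]
      have h1 : ((d:ℝ)^2-1) ≠ 0 := by nlinarith
      have h3 : ((d:ℝ)) ≠ 0 := by positivity
      have h4 : ((n:ℝ)) ≠ 0 := by positivity
      field_simp
      ring
    rw [eC, ptB_iso hn, hrel]
    have : (((-x2:ℝ)):ℂ) • swapM n = -(((x2:ℝ):ℂ) • swapM n) := by push_cast; match_scalars <;> ring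
    rw [this]
    have e2 : ((x2:ℝ):ℂ) • (1 : Matrix (Fin n × Fin n) (Fin n × Fin n) ℂ)
        + -(((x2:ℝ):ℂ) • swapM n) = ((x2:ℝ):ℂ) • (1 - swapM n) := by match_scalars <;> ring
    rw [e2]
    exact psd_smul one_sub_swap_psd hx20
  · -- constraint C3
    set x1 : ℝ := κ + (1-κ)/((d:ℝ)-1)^2 with hx1
    set x2 : ℝ := (1-l)/((d:ℝ)-1)^2 - l/((d:ℝ)-1) with hx2
    have htd : (0:ℝ) < (d:ℝ)-1 := by linarith
    have eC : ((κ:ℝ):ℂ) • maxEnt n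
        + (((d : ℂ) - 1) ^ 2)⁻¹ • ((((1-κ):ℝ):ℂ) • maxEnt n + (((1-l):ℝ):ℂ) • (1 - maxEnt n))
        - ((d : ℂ) - 1)⁻¹ • (((l:ℝ):ℂ) • (1 - maxEnt n))
        = (x1:ℂ) • maxEnt n + (x2:ℂ) • (1 - maxEnt n) := by
      rw [hx1, hx2]
      have h1 : ((d:ℝ)-1) ≠ 0 := ne_of_gt htd
      match_scalars <;> (push_cast; field_simp) <;> ring
    have hx20 : 0 ≤ x2 := by
      rw [hx2]
      have h1 : ((d:ℝ)-1) ≠ 0 := ne_of_gt htd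
      rw [div_sub_div _ _ (by positivity) h1]
      apply div_nonneg _ (by positivity)
      nlinarith
    have hrel : (x1 - x2)/(n:ℝ) = x2 := by
      rw [hx1, hx2, hκ, hl]
      have h1 : ((d:ℝ)-1) ≠ 0 := ne_of_gt htd
      have h2 : ((n:ℝ)+1) ≠ 0 := by positivity
      have h3 : ((d:ℝ)) ≠ 0 := by positivity
      have h4 : ((n:ℝ)) ≠ 0 := by positivity
      field_simp
      ring
    rw [eC, ptB_iso hn, hrel]
    have : ((x2:ℝ):ℂ) • (1 : Matrix (Fin n × Fin n) (Fin n × Fin n) ℂ) + ((x2:ℝ):ℂ) • swapM n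
        = ((x2:ℝ):ℂ) • (1 + swapM n) := by match_scalars <;> ring
    rw [this]
    exact psd_smul one_add_swap_psd hx20
  · -- objective
    have hmul : isotropicState n F * (((κ:ℝ):ℂ) • maxEnt n)
        = ((κ:ℝ):ℂ) • (isotropicState n F * maxEnt n) := by
      rw [Matrix.mul_smul]
    have hρΦ : isotropicState n F * maxEnt n = ((F:ℝ):ℂ) • maxEnt n := by
      unfold isotropicState
      rw [Matrix.add_mul, Matrix.smul_mul, Matrix.smul_mul, Matrix.sub_mul, Matrix.one_mul,
        phi_mul_phi, sub_self, smul_zero, add_zero]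
    rw [hmul, hρΦ, smul_smul, Matrix.trace_smul, smul_eq_mul, trace_phi (by omega), mul_one]
    rw [show ((κ:ℝ):ℂ) * ((F:ℝ):ℂ) = (((κ * F):ℝ):ℂ) by push_cast; ring]
    rw [Complex.ofReal_re, hκ]
    ring

end PPTAux

/-- Proposition: for the isotropic resource state with `F ≤ 1/dA` the PPT simulation
error of the `d`-dimensional swap channel equals `1 − 1/d²`, and for `F > 1/dA` with
`dA ≤ d²` it equals `1 − F·dA/d²` (in particular `0` when `dA = d²` and `F = 1`). -/
theorem isotropic_ppt_simulation_error (d dA : ℕ) (hd : 2 ≤ d) (hdA : 2 ≤ dA)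
    (F : ℝ) (hF0 : 0 ≤ F) (hF1 : F ≤ 1) :
    (F ≤ 1 / dA →
      1 - sSup (sdpFeasible d dA (isotropicState dA F)) = 1 - 1 / (d : ℝ) ^ 2) ∧
    (1 / dA < F → dA ≤ d ^ 2 →
      1 - sSup (sdpFeasible d dA (isotropicState dA F)) = 1 - F * dA / (d : ℝ) ^ 2) := by
  have hDpos : (0:ℝ) < (dA:ℝ) := by
    have : (2:ℝ) ≤ (dA:ℝ) := by exact_mod_cast hdA
    linarith
  constructor
  · intro hF
    have hFD1 : F * (dA:ℝ) ≤ 1 := by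
      rw [le_div_iff₀ hDpos] at hF
      exact hF
    have hub : ∀ x ∈ sdpFeasible d dA (isotropicState dA F), x ≤ 1 / (d:ℝ)^2 := by
      rintro x ⟨K, L, N, hK, hL, hN, hsum, h1, h2, h3, hx⟩
      rw [hx]
      exact (PPTAux.upper_bound hd hdA hF0 hF1 hK hL hN hsum h2).1 hFD1
    rw [IsGreatest.csSup_eq ⟨PPTAux.mem_case1 hd hdA hF0 hF1, hub⟩]
  · intro hF hdn
    have hFD1 : 1 ≤ F * (dA:ℝ) := by
      rw [div_lt_iff₀ hDpos] at hF
      linarith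
    have hub : ∀ x ∈ sdpFeasible d dA (isotropicState dA F), x ≤ F * (dA:ℝ) / (d:ℝ)^2 := by
      rintro x ⟨K, L, N, hK, hL, hN, hsum, h1, h2, h3, hx⟩
      rw [hx]
      exact (PPTAux.upper_bound hd hdA hF0 hF1 hK hL hN hsum h2).2 hFD1
    rw [IsGreatest.csSup_eq ⟨PPTAux.mem_case2 hd hdA hdn hF0 hF1, hub⟩]
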